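/- Let D = (0,1) and consider the deterministic motion X(t) = X(0) − t killed upon reaching 0, so the lifetime is ζ = X(0). For the Fleming–Viot system of two particles (x, y) ∈ (0,1)² driven by this motion — where at each time one particle reaches 0 it jumps to the position of the other particle — the extinction time satisfies τ_∞ = max{x, y}. In particular, extinction always occurs in finite time. -/

import Mathlib

/-!
After the first branching both particles sit at the same point `|y - x|`, so after the second
one both are at `0` and no further time elapses. Hence `τ` is eventually
`min x y + |y - x| = max x y`.
-/

open Filter Topology Finset

def branchStep (p : ℝ × ℝ) : ℝ × ℝ := (|p.2 - p.1|, |p.2 - p.1|)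

theorem branchStep_branchStep (p : ℝ × ℝ) : branchStep (branchStep p) = 0 := by
  simp [branchStep]

theorem min_add_abs_sub_eq_max (a b : ℝ) : min a b + |b - a| = max a b := by
  rw [← max_sub_min_eq_abs]
  ring

theorem tendsto_sum_range_of_add_eq_zero {M : Type*} [AddCommMonoid M] [TopologicalSpace M]
    {f : ℕ → M} {N : ℕ} (hf : ∀ n, f (n + N) = 0) :
    Tendsto (fun n ↦ ∑ i ∈ range n, f i) atTop (𝓝 (∑ i ∈ range N, f i)) := by
  refine (hasSum_sum_of_ne_finset_zero fun i hi ↦ ?_).tendsto_sum_nat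
  obtain ⟨n, rfl⟩ := Nat.exists_eq_add_of_le' (not_lt.mp (mem_range.not.mp hi))
  exact hf n

theorem stmt19_general (x y : ℝ)
    (s : ℕ → ℝ × ℝ) (hs0 : s 0 = (x, y))
    (hs : ∀ n : ℕ, s (n + 1) = (|(s n).2 - (s n).1|, |(s n).2 - (s n).1|))
    (σ : ℕ → ℝ) (hσ : ∀ n : ℕ, σ n = min (s n).1 (s n).2)
    (τ : ℕ → ℝ) (hτ : ∀ n : ℕ, τ n = ∑ i ∈ Finset.range n, σ i) :
    Tendsto τ atTop (nhds (max x y)) := by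
  have hstep : ∀ n, s (n + 1) = branchStep (s n) := hs
  have hσ_tail : ∀ n, σ (n + 2) = 0 := fun n ↦ by
    rw [hσ, hstep, hstep, branchStep_branchStep]
    simp
  have hσ_head : ∑ i ∈ range 2, σ i = max x y := by
    simp [sum_range_succ, hσ, hs, hs0, min_add_abs_sub_eq_max]
  rw [funext hτ, ← hσ_head]
  exact tendsto_sum_range_of_add_eq_zero hσ_tail

theorem stmt19 (x y : ℝ) (hx : x ∈ Set.Ioo (0 : ℝ) 1) (hy : y ∈ Set.Ioo (0 : ℝ) 1)
    (s : ℕ → ℝ × ℝ) (hs0 : s 0 = (x, y))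
    (hs : ∀ n : ℕ, s (n + 1) = (|(s n).2 - (s n).1|, |(s n).2 - (s n).1|))
    (σ : ℕ → ℝ) (hσ : ∀ n : ℕ, σ n = min (s n).1 (s n).2)
    (τ : ℕ → ℝ) (hτ : ∀ n : ℕ, τ n = ∑ i ∈ Finset.range n, σ i) :
    Tendsto τ atTop (nhds (max x y)) :=
  stmt19_general x y s hs0 hs σ hσ τ hτ
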